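/- arXiv:1804.04379 — 4 statements merged into one kernel-verified Lean document; each statement's English description precedes it below -/
import Mathlib

section
/- In an alternative ring, for all $a,b,c$: $(a,\,ab+ba,\,c) = (a^2,b,c)$. -/
def assoc {A : Type*} [NonUnitalNonAssocRing A] (x y z : A) : A :=
  x * y * z - x * (y * z)

theorem assoc_circ_eq_assoc_sq {A : Type*} [NonUnitalNonAssocRing A]
    (halt1 : ∀ a b : A, a * a * b = a * (a * b))
    (halt2 : ∀ a b : A, a * b * b = a * (b * b))
    (a b c : A) :
    assoc a (a * b + b * a) c = assoc (a * a) b c := by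
  have z1 : ∀ x z : A, assoc x x z = 0 := fun x z => sub_eq_zero.mpr (halt1 x z)
  have z2 : ∀ x z : A, assoc x z z = 0 := fun x z => sub_eq_zero.mpr (halt2 x z)
  have s1 : ∀ x y z : A, assoc y x z = - assoc x y z := by
    intro x y z
    have h := z1 (x + y) z
    have hx := z1 x z
    have hy := z1 y z
    simp only [assoc, add_mul, mul_add] at h hx hy ⊢
    linear_combination (norm := abel) h - hx - hy
  have s2 : ∀ x y z : A, assoc x z y = - assoc x y z := by
    intro x y z
    have h := z2 x (y + z)
    have hy := z2 x y
    have hz := z2 x z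
    simp only [assoc, add_mul, mul_add] at h hy hz ⊢
    linear_combination (norm := abel) h - hy - hz
  have teich : ∀ w x y z : A,
      assoc (w * x) y z - assoc w (x * y) z + assoc w x (y * z)
        = w * assoc x y z + assoc w x y * z := by
    intro w x y z
    simp only [assoc, mul_sub, sub_mul]
    abel
  have flex : ∀ x y : A, assoc x y x = 0 := by
    intro x y; rw [s1, z2, neg_zero]
  -- h1 : (a², b, c) = (a, ab, c) + a(a,b,c)
  have h1 : assoc (a * a) b c = assoc a (a * b) c + a * assoc a b c := by
    have h := teich a a b c
    rw [z1, z1, zero_mul, add_zero] at h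
    linear_combination (norm := abel) h
  -- h3 : (a, b, ac) = (a², b, c) - a(a,b,c)
  have h3 : assoc a b (a * c) = assoc (a * a) b c - a * assoc a b c := by
    have h := teich a a c b
    rw [z1, z1, zero_mul, add_zero, s2 (a*a) b c, s2 a b c, s2 a b (a*c)] at h
    simp only [mul_neg, neg_neg] at h
    linear_combination (norm := abel) h
  -- h4 : (a, ba, c) = (a², b, c) - (a, ab, c)
  have h4 : assoc a (b * a) c = assoc (a * a) b c - assoc a (a * b) c := by
    have h := teich a b a c
    rw [flex, zero_mul, add_zero, s1 a b c, h3, s1 a (a*b) c] at h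
    simp only [mul_neg, neg_neg] at h
    linear_combination (norm := abel) - h
  have lin : assoc a (a * b + b * a) c = assoc a (a * b) c + assoc a (b * a) c := by
    simp only [assoc, mul_add, add_mul]
    abel
  rw [lin, h4]
  abel
end

section
/- Let $Q$ be a quadratic form on a module $V$ over a commutative ring $R$ with polar form $B$, and let $u,v,w \in V$. In the Clifford algebra $\mathrm{Cl}(Q)$, the element $\delta = u(vw) + (vw)u - B(v,w)\,u$ commutes with $u$, $v$, and $w$. -/
theorem delta_commutes_in_clifford {R M : Type*} [CommRing R] [AddCommGroup M]
    [Module R M] (Q : QuadraticForm R M) (u v w : M) :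
    let ι := CliffordAlgebra.ι Q
    let δ := ι u * (ι v * ι w) + (ι v * ι w) * ι u -
      algebraMap R (CliffordAlgebra Q) (QuadraticMap.polar Q v w) * ι u
    δ * ι u = ι u * δ ∧ δ * ι v = ι v * δ ∧ δ * ι w = ι w * δ := by
  intro ι δ
  set a := ι u with ha
  set b := ι v with hb
  set c := ι w with hc
  have swap : ∀ x y : M, ι x * ι y = QuadraticMap.polar Q x y • (1 : CliffordAlgebra Q)
      - ι y * ι x := by
    intro x y
    rw [eq_sub_iff_add_eq, Algebra.smul_def, mul_one]
    exact CliffordAlgebra.ι_mul_ι_add_swap x y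
  have swap' : ∀ (x y : M) (z : CliffordAlgebra Q),
      ι x * (ι y * z) = QuadraticMap.polar Q x y • z - ι y * (ι x * z) := by
    intro x y z
    rw [← mul_assoc, swap, sub_mul, smul_mul_assoc, one_mul, mul_assoc]
  have sq : ∀ x : M, ι x * ι x = Q x • (1 : CliffordAlgebra Q) := by
    intro x; rw [Algebra.smul_def, mul_one]; exact CliffordAlgebra.ι_sq_scalar Q x
  have sq' : ∀ (x : M) (z : CliffordAlgebra Q), ι x * (ι x * z) = Q x • z := by
    intro x z; rw [← mul_assoc, sq, smul_mul_assoc, one_mul]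
  have hδ : δ = a * (b * c) + (b * c) * a
      - QuadraticMap.polar Q v w • a := by
    rw [Algebra.smul_def]
  rw [hδ]
  refine ⟨?_, ?_, ?_⟩ <;>
  · simp only [ha, hb, hc, mul_assoc, add_mul, sub_mul, mul_add, mul_sub,
      smul_mul_assoc, mul_smul_comm, swap' v u, swap' w u, swap' w v,
      swap v u, swap w u, swap w v, sq, sq', mul_one, smul_sub, smul_add,
      QuadraticMap.polar_comm (⇑Q) w v]
    module
end

section
/- Let $F$ be a field of characteristic not $2$, $a,b,c \in F^\times$, and $d \in F^\times$ such that $-abc$ is represented by the binary form $\langle 1,-d\rangle$. Then there is an isometry of quadratic forms over $F$: $\langle\langle a, b, d\rangle\rangle \cong \langle\langle d\rangle\rangle \otimes \langle\langle -ab, -ac\rangle\rangle$, where $\langle\langle \gamma_1,\dots,\gamma_m\rangle\rangle = \langle 1,-\gamma_1\rangle\otimes\cdots\otimes\langle 1,-\gamma_m\rangle$. -/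
/-!
Both sides are `⟨⟨d⟩⟩ ⊗ ⟨u₀, u₁, u₂, u₃⟩`, with `u = (1, -a, -b, ab)` on the left and
`u = (1, ab, ac, a²bc)` on the right. The binary form `⟨⟨d⟩⟩ = ⟨1, -d⟩` is the norm form of
`x + y√d`, so multiplication by `x + y√d` shows `s⟨⟨d⟩⟩ ≅ ⟨⟨d⟩⟩` for every value
`s = x² - dy²` that is a unit. With `s = -abc` this gives `-a⟨⟨d⟩⟩ ≅ a²bc⟨⟨d⟩⟩` and
`-b⟨⟨d⟩⟩ ≅ ab²c⟨⟨d⟩⟩ ≅ ac⟨⟨d⟩⟩`, while the blocks `⟨⟨d⟩⟩` and `ab⟨⟨d⟩⟩` occur on both sides.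
-/

open QuadraticMap

namespace QuadraticMap

variable {R : Type*} [CommRing R] {ι κ : Type*} [Fintype ι] [Fintype κ]

theorem equivalent_weightedSumSquares_reindex {w : ι → R} {w' : κ → R} (e : ι ≃ κ)
    (h : ∀ i, w' (e i) = w i) :
    Equivalent (weightedSumSquares R w) (weightedSumSquares R w') :=
  ⟨{ LinearEquiv.funCongrLeft R R e.symm with
      map_app' v := by
        simp only [weightedSumSquares_apply]
        exact (Fintype.sum_equiv e _ _ fun i => by simp [h]).symm }⟩

theorem equivalent_weightedSumSquares_uncurry_pi (w : ι → κ → R) :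
    Equivalent (weightedSumSquares R (Function.uncurry w))
      (pi fun i => weightedSumSquares R (w i)) :=
  ⟨{ LinearEquiv.curry R R ι κ with
      map_app' v := by simp [weightedSumSquares_apply, pi_apply, Fintype.sum_prod_type] }⟩

theorem Equivalent.weightedSumSquares_uncurry {w w' : ι → κ → R}
    (h : ∀ i, Equivalent (weightedSumSquares R (w i)) (weightedSumSquares R (w' i))) :
    Equivalent (weightedSumSquares R (Function.uncurry w))
      (weightedSumSquares R (Function.uncurry w')) :=
  (equivalent_weightedSumSquares_uncurry_pi w).trans
    ((Equivalent.pi h).trans (equivalent_weightedSumSquares_uncurry_pi w').symm)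

theorem equivalent_smul_weightedSumSquares_one_neg {d t t' x y : R}
    (hunit : IsUnit (x ^ 2 - d * y ^ 2)) (ht : (x ^ 2 - d * y ^ 2) * t = t') :
    Equivalent (weightedSumSquares R (t • ![1, -d])) (weightedSumSquares R (t' • ![1, -d])) := by
  -- the matrix of multiplication by `x + y√d` in the basis `1, √d`
  have hdet : IsUnit (!![x, d * y; y, x]).det := by
    rw [Matrix.det_fin_two_of]
    convert hunit using 1
    ring
  refine ⟨IsometryEquiv.symm
    { Matrix.toLinearEquiv (Pi.basisFun R (Fin 2)) _ hdet with
      map_app' v := ?_ }⟩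
  simp [← ht, Matrix.toLin_eq_toLin', weightedSumSquares_apply, Fin.sum_univ_two,
    Matrix.vecHead, Matrix.vecTail]
  ring

end QuadraticMap

theorem pfister_decomposition_general {F : Type*} [Field F]
    (a b c d : F) (ha : a ≠ 0) (hb : b ≠ 0) (hc : c ≠ 0)
    (hrep : ∃ x y : F, x ^ 2 - d * y ^ 2 = -(a * b * c)) :
    Equivalent
      (weightedSumSquares F
        ![1, -a, -b, a * b, -d, a * d, b * d, -(a * b * d)])
      (weightedSumSquares F
        ![1, a * b, a * c, (a * b) * (a * c),
          -d, -(d * (a * b)), -(d * (a * c)), -(d * ((a * b) * (a * c)))]) := by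
  obtain ⟨x, y, hxy⟩ := hrep
  have hs : x ^ 2 - d * y ^ 2 ≠ 0 := by rw [hxy]; simp [ha, hb, hc]
  have hscaled : (x / b) ^ 2 - d * (y / b) ^ 2 = (x ^ 2 - d * y ^ 2) / b ^ 2 := by ring
  have hblocks : ∀ j, Equivalent (weightedSumSquares F (![1, a * b, -b, -a] j • ![1, -d]))
      (weightedSumSquares F (![1, a * b, a * c, (a * b) * (a * c)] j • ![1, -d])) := by
    intro j
    fin_cases j
    · exact .refl _
    · exact .refl _
    · refine equivalent_smul_weightedSumSquares_one_neg (t := -b) (t' := a * c)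
        (hscaled ▸ (div_ne_zero hs (pow_ne_zero 2 hb)).isUnit) ?_
      rw [hscaled, hxy]
      field_simp
    · exact equivalent_smul_weightedSumSquares_one_neg (t := -a) (t' := a * b * (a * c))
        hs.isUnit (by linear_combination -a * hxy)
  -- `e (j, k) = j + 4k`: coordinates `j` and `j + 4` form the `j`-th block `uⱼ • ⟨1, -d⟩`
  let e : Fin 4 × Fin 2 ≃ Fin 8 := (Equiv.prodComm _ _).trans finProdFinEquiv
  refine .trans ?_ ((Equivalent.weightedSumSquares_uncurry hblocks).trans ?_)
  · refine (equivalent_weightedSumSquares_reindex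
      ((Equiv.prodCongr (Equiv.swap 1 3) (.refl _)).trans e) ?_).symm
    rintro ⟨j, k⟩
    fin_cases j <;> fin_cases k <;> simp [e, finProdFinEquiv, Equiv.swap_apply_def]
  · refine equivalent_weightedSumSquares_reindex e ?_
    rintro ⟨j, k⟩
    fin_cases j <;> fin_cases k <;> simp [e, finProdFinEquiv] <;> ring

theorem pfister_decomposition {F : Type*} [Field F] (hF : ringChar F ≠ 2)
    (a b c d : F) (ha : a ≠ 0) (hb : b ≠ 0) (hc : c ≠ 0) (hd : d ≠ 0)
    (hrep : ∃ x y : F, x ^ 2 - d * y ^ 2 = -(a * b * c)) :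
    Equivalent
      (weightedSumSquares F
        ![1, -a, -b, a * b, -d, a * d, b * d, -(a * b * d)])
      (weightedSumSquares F
        ![1, a * b, a * c, (a * b) * (a * c),
          -d, -(d * (a * b)), -(d * (a * c)), -(d * ((a * b) * (a * c)))]) :=
  pfister_decomposition_general a b c d ha hb hc hrep
end

section
/- Let $A$ be an alternative ring and $u,v,w \in A$ with $uw+wu = 0$ and $vw+wv = 0$. Then the associator satisfies $(u,v,w) = -[w, uv]$, i.e. $(u,v,w) + w(uv) - (uv)w = 0$. -/
theorem assoc_eq_neg_commutator {A : Type*} [NonUnitalNonAssocRing A]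
    (halt1 : ∀ a b : A, a * a * b = a * (a * b))
    (halt2 : ∀ a b : A, a * b * b = a * (b * b))
    (u v w : A) (huw : u * w + w * u = 0) (hvw : v * w + w * v = 0) :
    assoc u v w = -(w * (u * v) - (u * v) * w) := by
  have key : w * (u * v) + u * (w * v) = 0 := by
    have h := halt1 (w + u) v
    simp only [add_mul, mul_add] at h
    rw [halt1 w v, halt1 u v] at h
    have hz : w * u * v + u * w * v = 0 := by
      rw [← add_mul, add_comm (w * u) (u * w), huw, zero_mul]
    linear_combination (norm := abel) hz - h
  have hvw' : v * w = -(w * v) := eq_neg_of_add_eq_zero_left hvw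
  have key' : w * (u * v) = -(u * (w * v)) := eq_neg_of_add_eq_zero_left key
  unfold assoc
  rw [hvw', key', mul_neg]
  abel
end
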